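/- For all sufficiently large n, |A_{≥k}| ≤ α^{1/2}·n, i.e., the number of m ∈ [n] having at least k distinct prime factors that are ≤ W is at most n·exp(−(k log k)/2). -/

import Mathlib

open Real Filter

/-- `W = W(n) = exp(2^{-10} (log n · log log n)^{1/2})`. -/
noncomputable def Wp (n : ℕ) : ℝ :=
  Real.exp ((2 : ℝ) ^ (-10 : ℤ) * Real.sqrt (Real.log n * Real.log (Real.log n)))

/-- `k = k(n) = 2^{-5} (log n / log log n)^{1/2}`. -/
noncomputable def kp (n : ℕ) : ℝ :=
  (2 : ℝ) ^ (-5 : ℤ) * Real.sqrt (Real.log n / Real.log (Real.log n))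

/-- `α = α(n) = exp(−k log k)`. -/
noncomputable def ap (n : ℕ) : ℝ := Real.exp (-(kp n * Real.log (kp n)))

/-- `𝒫_W`: the set of primes `p ≤ W(n)`. -/
noncomputable def primesLe (n : ℕ) : Set ℕ := {p : ℕ | p.Prime ∧ (p : ℝ) ≤ Wp n}

/-- `A_S`: the set of `m ∈ {1,…,n}` whose set of prime divisors in `𝒫_W` is exactly `S`. -/
noncomputable def ASet (n : ℕ) (S : Set ℕ) : Set ℕ :=
  {m : ℕ | 1 ≤ m ∧ m ≤ n ∧ ∀ p ∈ primesLe n, (p ∣ m ↔ p ∈ S)}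

/-- `A_{≥k} = [n] \ ⋃_{S ⊆ 𝒫_W, |S| < k} A_S`: the set of `m ∈ {1,…,n}` having at least `k`
distinct prime factors that are at most `W`. -/
noncomputable def AgeK (n : ℕ) : Set ℕ :=
  {m : ℕ | 1 ≤ m ∧ m ≤ n} \
    ⋃ S ∈ {S : Set ℕ | S ⊆ primesLe n ∧ (S.ncard : ℝ) < kp n}, ASet n S


lemma binom_aux : ∀ (m : ℕ) (F S : ℝ), 0 ≤ F → 0 ≤ S →
    S ^ (m + 1) + (m + 1 : ℝ) * F * S ^ m ≤ (F + S) ^ (m + 1) := by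
  intro m
  induction m with
  | zero => intro F S hF hS; simp; nlinarith
  | succ m ih =>
    intro F S hF hS
    have h := ih F S hF hS
    have h2 : (F + S) * (S ^ (m + 1) + (m + 1 : ℝ) * F * S ^ m) ≤ (F + S) * (F + S) ^ (m + 1) :=
      mul_le_mul_of_nonneg_left h (by linarith)
    have e1 : (F + S) * (F + S) ^ (m + 1) = (F + S) ^ (m + 1 + 1) := by ring
    have e2 : (F + S) * (S ^ (m + 1) + (m + 1 : ℝ) * F * S ^ m)
        = S ^ (m + 1 + 1) + ((m + 1 : ℝ) + 1) * F * S ^ (m + 1) + (m + 1 : ℝ) * (F * F) * S ^ m := by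
      ring
    rw [e1, e2] at h2
    have h3 : 0 ≤ (m + 1 : ℝ) * (F * F) * S ^ m := by positivity
    push_cast
    push_cast at h2
    linarith

open Finset in
lemma factorial_mul_esymm_le (f : ℕ → ℝ) (hf : ∀ i, 0 ≤ f i) (s : Finset ℕ) :
    ∀ K : ℕ, (K.factorial : ℝ) * ∑ T ∈ s.powersetCard K, ∏ p ∈ T, f p
      ≤ (∑ p ∈ s, f p) ^ K := by
  classical
  induction s using Finset.induction_on with
  | empty =>
    intro K
    cases K with
    | zero => simp
    | succ K =>
      rw [Finset.powersetCard_eq_empty.mpr (by simp)]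
      simp
  | @insert a s ha ih =>
    intro K
    cases K with
    | zero => simp
    | succ K =>
      rw [Finset.powersetCard_succ_insert ha]
      have hdisj : Disjoint (s.powersetCard (K + 1)) ((s.powersetCard K).image (insert a)) := by
        rw [Finset.disjoint_left]
        intro T hT hT'
        obtain ⟨t, ht, rfl⟩ := Finset.mem_image.1 hT'
        have : a ∈ s := (Finset.mem_powersetCard.1 hT).1 (Finset.mem_insert_self a t)
        exact ha this
      rw [Finset.sum_union hdisj, Finset.sum_image ?inj]
      case inj =>
        intro t ht t' ht' h
        have hat : a ∉ t := fun h' => ha ((Finset.mem_powersetCard.1 ht).1 h')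
        have hat' : a ∉ t' := fun h' => ha ((Finset.mem_powersetCard.1 ht').1 h')
        have := congrArg (Finset.erase · a) h
        simpa [Finset.erase_insert hat, Finset.erase_insert hat'] using this
      have hprod : ∀ t ∈ s.powersetCard K, ∏ p ∈ insert a t, f p = f a * ∏ p ∈ t, f p := by
        intro t ht
        exact Finset.prod_insert (fun h' => ha ((Finset.mem_powersetCard.1 ht).1 h'))
      rw [Finset.sum_congr rfl hprod, Finset.sum_insert ha, ← Finset.mul_sum]
      set A := ∑ T ∈ s.powersetCard (K + 1), ∏ p ∈ T, f p with hA
      set B := ∑ T ∈ s.powersetCard K, ∏ p ∈ T, f p with hB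
      set S := ∑ p ∈ s, f p with hSdef
      have hB0 : 0 ≤ B := Finset.sum_nonneg fun T _ => Finset.prod_nonneg fun p _ => hf p
      have hS0 : 0 ≤ S := Finset.sum_nonneg fun p _ => hf p
      have ih1 := ih (K + 1)
      have ih2 := ih K
      rw [← hA] at ih1
      rw [← hB] at ih2
      have hbin := binom_aux K (f a) S (hf a) hS0
      have hfac : (((K + 1).factorial : ℕ) : ℝ) = (K + 1 : ℝ) * (K.factorial : ℝ) := by
        rw [Nat.factorial_succ]; push_cast; ring
      have hmul : (K + 1 : ℝ) * f a * ((K.factorial : ℝ) * B) ≤ (K + 1 : ℝ) * f a * S ^ K :=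
        mul_le_mul_of_nonneg_left ih2 (mul_nonneg (by positivity) (hf a))
      rw [hfac] at ih1 ⊢
      calc (K + 1 : ℝ) * (K.factorial : ℝ) * (A + f a * B)
          = (K + 1 : ℝ) * (K.factorial : ℝ) * A + (K + 1 : ℝ) * f a * ((K.factorial : ℝ) * B) := by
            ring
        _ ≤ S ^ (K + 1) + (K + 1 : ℝ) * f a * S ^ K := by push_cast at ih1; linarith
        _ ≤ (f a + S) ^ (K + 1) := hbin

-- block bound: sum of 1/p over primes in [2^j, 2^(j+1)) is at most 4/j
lemma block_bound (j : ℕ) (hj : 1 ≤ j) :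
    ∑ p ∈ (Finset.Ico (2 ^ j) (2 ^ (j + 1))).filter Nat.Prime, ((p : ℝ))⁻¹ ≤ 4 / j := by
  set Q := (Finset.Ico (2 ^ j) (2 ^ (j + 1))).filter Nat.Prime with hQ
  have hmemQ : ∀ p ∈ Q, 2 ^ j ≤ p ∧ p < 2 ^ (j + 1) ∧ p.Prime := by
    intro p hp
    have h1 := Finset.mem_filter.1 hp
    have h2 := Finset.mem_Ico.1 h1.1
    exact ⟨h2.1, h2.2, h1.2⟩
  -- each term at most (2^j)⁻¹
  have hterm : ∀ p ∈ Q, (p : ℝ)⁻¹ ≤ ((2 : ℝ) ^ j)⁻¹ := by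
    intro p hp
    have h := (hmemQ p hp).1
    have : ((2 : ℝ) ^ j) ≤ (p : ℝ) := by exact_mod_cast h
    exact inv_anti₀ (by positivity) this
  have hsum1 : ∑ p ∈ Q, ((p : ℝ))⁻¹ ≤ (Q.card : ℝ) * ((2 : ℝ) ^ j)⁻¹ := by
    calc ∑ p ∈ Q, ((p : ℝ))⁻¹ ≤ ∑ _p ∈ Q, ((2 : ℝ) ^ j)⁻¹ := Finset.sum_le_sum hterm
      _ = (Q.card : ℝ) * ((2 : ℝ) ^ j)⁻¹ := by rw [Finset.sum_const, nsmul_eq_mul]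
  -- card bound via primorial
  have hlog2pos : (0 : ℝ) < Real.log 2 := Real.log_pos (by norm_num)
  have hcardlog : (Q.card : ℝ) * ((j : ℝ) * Real.log 2) ≤ ∑ p ∈ Q, Real.log p := by
    have : ∀ p ∈ Q, (j : ℝ) * Real.log 2 ≤ Real.log p := by
      intro p hp
      have h := (hmemQ p hp).1
      have h2 : ((2 : ℝ) ^ j) ≤ (p : ℝ) := by exact_mod_cast h
      calc (j : ℝ) * Real.log 2 = Real.log ((2 : ℝ) ^ j) := by rw [Real.log_pow]
        _ ≤ Real.log p := Real.log_le_log (by positivity) h2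
    calc (Q.card : ℝ) * ((j : ℝ) * Real.log 2) ≤ ∑ _p ∈ Q, (j : ℝ) * Real.log 2 := by
          rw [Finset.sum_const, nsmul_eq_mul]
      _ ≤ ∑ p ∈ Q, Real.log p := Finset.sum_le_sum this
  have hsumlog : ∑ p ∈ Q, Real.log p ≤ (2 : ℝ) ^ (j + 1) * (2 * Real.log 2) := by
    have hsub : Q ⊆ (Finset.range (2 ^ (j + 1) + 1)).filter Nat.Prime := by
      intro p hp
      have h := hmemQ p hp
      exact Finset.mem_filter.2 ⟨Finset.mem_range.2 (by omega), h.2.2⟩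
    have h1 : ∑ p ∈ Q, Real.log p
        ≤ ∑ p ∈ (Finset.range (2 ^ (j + 1) + 1)).filter Nat.Prime, Real.log p := by
      apply Finset.sum_le_sum_of_subset_of_nonneg hsub
      intro p hp _
      have : p.Prime := (Finset.mem_filter.1 hp).2
      exact Real.log_nonneg (by exact_mod_cast this.one_lt.le)
    have h2 : ∑ p ∈ (Finset.range (2 ^ (j + 1) + 1)).filter Nat.Prime, Real.log p
        = Real.log (primorial (2 ^ (j + 1))) := by
      rw [primorial]
      rw [Nat.cast_prod, Real.log_prod]
      intro p hp
      have : p.Prime := (Finset.mem_filter.1 hp).2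
      exact_mod_cast this.pos.ne'
    have h3 : Real.log (primorial (2 ^ (j + 1))) ≤ Real.log ((4 : ℝ) ^ (2 ^ (j + 1))) := by
      apply Real.log_le_log
      · exact_mod_cast primorial_pos (2 ^ (j + 1))
      · exact_mod_cast primorial_le_4_pow (2 ^ (j + 1))
    have h4 : Real.log ((4 : ℝ) ^ (2 ^ (j + 1))) = (2 : ℝ) ^ (j + 1) * (2 * Real.log 2) := by
      rw [Real.log_pow]
      have : (4 : ℝ) = 2 ^ 2 := by norm_num
      rw [this, Real.log_pow]
      push_cast
      ring
    calc ∑ p ∈ Q, Real.log p ≤ _ := h1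
      _ = _ := h2
      _ ≤ _ := h3
      _ = _ := h4
  have hjpos : (0 : ℝ) < j := by exact_mod_cast hj
  have hcard : (Q.card : ℝ) ≤ 2 ^ (j + 2) / j := by
    have h0 := hcardlog.trans hsumlog
    rw [le_div_iff₀ hjpos]
    have h5 : (Q.card : ℝ) * (j : ℝ) * Real.log 2 ≤ 2 ^ (j + 2) * Real.log 2 := by
      have hpw : (2 : ℝ) ^ (j + 2) = 2 ^ (j + 1) * 2 := by ring
      nlinarith [h0]
    exact le_of_mul_le_mul_right h5 hlog2pos
  calc ∑ p ∈ Q, ((p : ℝ))⁻¹ ≤ (Q.card : ℝ) * ((2 : ℝ) ^ j)⁻¹ := hsum1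
    _ ≤ (2 ^ (j + 2) / j) * ((2 : ℝ) ^ j)⁻¹ := by
        apply mul_le_mul_of_nonneg_right hcard (by positivity)
    _ = 4 / j := by
        rw [pow_succ, pow_succ]
        field_simp
        ring

lemma mertens_lite (M : ℕ) (hM : 16 ≤ M) :
    ∑ p ∈ (Finset.range (M + 1)).filter Nat.Prime, ((p : ℝ))⁻¹
      ≤ 8 + 4 * Real.log (Real.log M) := by
  set J := Nat.log 2 M with hJdef
  have hM0 : M ≠ 0 := by omega
  have hJ4 : 4 ≤ J := by
    have h16 : Nat.log 2 16 = 4 := Nat.log_eq_of_pow_le_of_lt_pow (by norm_num) (by norm_num)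
    calc 4 = Nat.log 2 16 := h16.symm
      _ ≤ J := Nat.log_mono_right hM
  have hJ1 : 1 ≤ J := by omega
  -- covering by dyadic blocks
  have hsub : (Finset.range (M + 1)).filter Nat.Prime
      ⊆ (Finset.Icc 1 J).biUnion
          (fun j => (Finset.Ico (2 ^ j) (2 ^ (j + 1))).filter Nat.Prime) := by
    intro p hp
    have hp' := Finset.mem_filter.1 hp
    have hpM : p ≤ M := by have := Finset.mem_range.1 hp'.1; omega
    have hpp : p.Prime := hp'.2
    refine Finset.mem_biUnion.2 ⟨Nat.log 2 p, ?_, ?_⟩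
    · refine Finset.mem_Icc.2 ⟨?_, Nat.log_mono_right hpM⟩
      have h2 : Nat.log 2 2 = 1 := Nat.log_eq_of_pow_le_of_lt_pow (by norm_num) (by norm_num)
      calc 1 = Nat.log 2 2 := h2.symm
        _ ≤ Nat.log 2 p := Nat.log_mono_right hpp.two_le
    · refine Finset.mem_filter.2 ⟨Finset.mem_Ico.2 ⟨?_, ?_⟩, hpp⟩
      · exact Nat.pow_log_le_self 2 hpp.pos.ne'
      · exact Nat.lt_pow_succ_log_self (by norm_num) p
  have hdisj : (↑(Finset.Icc 1 J) : Set ℕ).PairwiseDisjoint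
      (fun j => (Finset.Ico (2 ^ j) (2 ^ (j + 1))).filter Nat.Prime) := by
    intro j _ j' _ hne
    simp only [Function.onFun]
    rw [Finset.disjoint_left]
    intro x hx hx'
    have h1 := Finset.mem_Ico.1 (Finset.mem_filter.1 hx).1
    have h2 := Finset.mem_Ico.1 (Finset.mem_filter.1 hx').1
    have e1 : Nat.log 2 x = j := Nat.log_eq_of_pow_le_of_lt_pow h1.1 h1.2
    have e2 : Nat.log 2 x = j' := Nat.log_eq_of_pow_le_of_lt_pow h2.1 h2.2
    exact hne (e1 ▸ e2)
  have step1 : ∑ p ∈ (Finset.range (M + 1)).filter Nat.Prime, ((p : ℝ))⁻¹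
      ≤ ∑ j ∈ Finset.Icc 1 J,
          ∑ p ∈ (Finset.Ico (2 ^ j) (2 ^ (j + 1))).filter Nat.Prime, ((p : ℝ))⁻¹ := by
    rw [← Finset.sum_biUnion hdisj]
    apply Finset.sum_le_sum_of_subset_of_nonneg hsub
    intro p _ _
    positivity
  have step2 : ∑ j ∈ Finset.Icc 1 J,
      ∑ p ∈ (Finset.Ico (2 ^ j) (2 ^ (j + 1))).filter Nat.Prime, ((p : ℝ))⁻¹
      ≤ ∑ j ∈ Finset.Icc 1 J, 4 / (j : ℝ) := by
    apply Finset.sum_le_sum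
    intro j hj
    exact block_bound j (Finset.mem_Icc.1 hj).1
  have step3 : ∑ j ∈ Finset.Icc 1 J, 4 / (j : ℝ) = 4 * (harmonic J : ℝ) := by
    rw [harmonic_eq_sum_Icc]
    push_cast
    rw [Finset.mul_sum]
    apply Finset.sum_congr rfl
    intro j _
    rw [div_eq_mul_inv]
  have step4 : (harmonic J : ℝ) ≤ 1 + Real.log J := harmonic_le_one_add_log J
  -- J ≤ 2 log M
  have hlogM : Real.log 16 ≤ Real.log M := by
    apply Real.log_le_log (by norm_num)
    exact_mod_cast hM
  have hlogM1 : (1 : ℝ) < Real.log M := by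
    have : (1 : ℝ) < Real.log 16 := by
      rw [show (16 : ℝ) = 2 ^ 4 by norm_num, Real.log_pow]
      have := Real.log_two_gt_d9
      push_cast
      nlinarith
    linarith
  have hJle : (J : ℝ) ≤ 2 * Real.log M := by
    have h2J : (2 : ℝ) ^ J ≤ M := by exact_mod_cast Nat.pow_log_le_self 2 hM0
    have : (J : ℝ) * Real.log 2 ≤ Real.log M := by
      calc (J : ℝ) * Real.log 2 = Real.log ((2 : ℝ) ^ J) := by rw [Real.log_pow]
        _ ≤ Real.log M := Real.log_le_log (by positivity) h2J
    nlinarith [Real.log_two_gt_d9]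
  have hlogJ : Real.log J ≤ Real.log 2 + Real.log (Real.log M) := by
    calc Real.log J ≤ Real.log (2 * Real.log M) := by
          apply Real.log_le_log (by positivity) hJle
      _ = Real.log 2 + Real.log (Real.log M) := by
          rw [Real.log_mul (by norm_num) (by linarith)]
  have hlog2 : Real.log 2 ≤ 1 := by
    have := Real.exp_one_gt_d9
    have h := Real.log_le_log (by norm_num : (0:ℝ) < 2) (by nlinarith : (2:ℝ) ≤ Real.exp 1)
    rwa [Real.log_exp] at h
  calc ∑ p ∈ (Finset.range (M + 1)).filter Nat.Prime, ((p : ℝ))⁻¹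
      ≤ ∑ j ∈ Finset.Icc 1 J, 4 / (j : ℝ) := step1.trans step2
    _ = 4 * (harmonic J : ℝ) := step3
    _ ≤ 4 * (1 + Real.log J) := by linarith
    _ ≤ 4 * (1 + Real.log 2 + Real.log (Real.log M)) := by linarith
    _ ≤ 8 + 4 * Real.log (Real.log M) := by linarith

lemma two_le_exp_one : (2 : ℝ) ≤ Real.exp 1 := by
  have := Real.add_one_le_exp (1 : ℝ)
  linarith

lemma pow2_le_exp (j : ℕ) : (2 : ℝ) ^ j ≤ Real.exp j := by
  calc (2 : ℝ) ^ j ≤ Real.exp 1 ^ j := pow_le_pow_left₀ (by norm_num) two_le_exp_one j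
    _ = Real.exp j := by rw [← Real.exp_nat_mul]; ring_nf

lemma log_le_two_sqrt {y : ℝ} (hy : 0 < y) : Real.log y ≤ 2 * Real.sqrt y := by
  have h1 : Real.log (Real.sqrt y) = Real.log y / 2 := Real.log_sqrt hy.le
  have h2 : Real.log (Real.sqrt y) ≤ Real.sqrt y - 1 :=
    Real.log_le_sub_one_of_pos (Real.sqrt_pos.2 hy)
  nlinarith [Real.sqrt_nonneg y]

lemma pow_le_factorial_mul_exp (K : ℕ) :
    ((K : ℝ)) ^ K ≤ (K.factorial : ℝ) * Real.exp 1 ^ K := by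
  have h1 : ∑ i ∈ Finset.range (K + 1), ((K : ℝ)) ^ i / (i.factorial : ℝ) ≤ Real.exp K :=
    Real.sum_le_exp_of_nonneg (by positivity) (K + 1)
  have h2 : ((K : ℝ)) ^ K / (K.factorial : ℝ)
      ≤ ∑ i ∈ Finset.range (K + 1), ((K : ℝ)) ^ i / (i.factorial : ℝ) := by
    exact Finset.single_le_sum (f := fun i => ((K : ℝ)) ^ i / (i.factorial : ℝ))
      (fun i _ => by positivity) (Finset.self_mem_range_succ K)
  have h3 : ((K : ℝ)) ^ K / (K.factorial : ℝ) ≤ Real.exp 1 ^ K := by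
    calc ((K : ℝ)) ^ K / (K.factorial : ℝ) ≤ Real.exp K := h2.trans h1
      _ = Real.exp 1 ^ K := by rw [← Real.exp_nat_mul]; ring_nf
  have hfpos : (0 : ℝ) < (K.factorial : ℝ) := by exact_mod_cast K.factorial_pos
  calc ((K : ℝ)) ^ K = ((K : ℝ)) ^ K / (K.factorial : ℝ) * (K.factorial : ℝ) := by
        field_simp
    _ ≤ Real.exp 1 ^ K * (K.factorial : ℝ) := by
        exact mul_le_mul_of_nonneg_right h3 hfpos.le
    _ = (K.factorial : ℝ) * Real.exp 1 ^ K := by ring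
open Classical in
noncomputable def Pfin (n : ℕ) : Finset ℕ :=
  (Finset.range (n + 1)).filter (fun p => p.Prime ∧ (p : ℝ) ≤ Wp n)

lemma primesLe_eq (n : ℕ) (hW : Wp n ≤ (n : ℝ)) : primesLe n = ↑(Pfin n) := by
  classical
  ext p
  simp only [primesLe, Pfin, Set.mem_setOf_eq, Finset.coe_filter, Finset.mem_range]
  constructor
  · rintro ⟨hp, hle⟩
    refine ⟨?_, hp, hle⟩
    have : (p : ℝ) ≤ (n : ℝ) := hle.trans hW
    have : p ≤ n := by exact_mod_cast this
    omega
  · rintro ⟨_, hp, hle⟩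
    exact ⟨hp, hle⟩

lemma count_bound (n : ℕ) (hW : Wp n ≤ (n : ℝ)) :
    ((AgeK n).ncard : ℝ) ≤ (n : ℝ) *
      ∑ T ∈ (Pfin n).powersetCard ⌈kp n⌉₊, ∏ p ∈ T, ((p : ℝ))⁻¹ := by
  classical
  set K := ⌈kp n⌉₊ with hK
  set P := Pfin n with hP
  set B : Finset ℕ := (P.powersetCard K).biUnion
    (fun T => (Finset.Ioc 0 n).filter (fun m => (∏ p ∈ T, p) ∣ m)) with hBdef
  have hsub : AgeK n ⊆ ↑B := by
    intro m hm
    obtain ⟨⟨hm1, hm2⟩, hm3⟩ := hm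
    set Sm : Finset ℕ := P.filter (· ∣ m) with hSm
    have hmA : m ∈ ASet n (↑Sm : Set ℕ) := by
      refine ⟨hm1, hm2, ?_⟩
      intro p hp
      rw [primesLe_eq n hW] at hp
      simp only [hSm, Finset.coe_filter, Set.mem_setOf_eq]
      constructor
      · intro hd; exact ⟨hp, hd⟩
      · intro hd; exact hd.2
    have hSsub : (↑Sm : Set ℕ) ⊆ primesLe n := by
      rw [primesLe_eq n hW]
      exact_mod_cast Finset.filter_subset _ _
    have hcard : kp n ≤ (Sm.card : ℝ) := by
      by_contra hlt
      push_neg at hlt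
      apply hm3
      refine Set.mem_iUnion₂.2 ⟨(↑Sm : Set ℕ), ?_, hmA⟩
      simp only [Set.mem_setOf_eq]
      rw [Set.ncard_coe_finset]
      exact ⟨hSsub, hlt⟩
    have hKcard : K ≤ Sm.card := Nat.ceil_le.2 hcard
    obtain ⟨T, hTsub, hTcard⟩ := Finset.exists_subset_card_eq hKcard
    have hTP : T ∈ P.powersetCard K :=
      Finset.mem_powersetCard.2 ⟨hTsub.trans (Finset.filter_subset _ _), hTcard⟩
    have hdvd : (∏ p ∈ T, p) ∣ m := by
      apply Finset.prod_primes_dvd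
      · intro p hp
        have hpP : p ∈ P := (hTsub.trans (Finset.filter_subset _ _)) hp
        have : p.Prime := (Finset.mem_filter.1 hpP).2.1
        exact this.prime
      · intro p hp
        exact (Finset.mem_filter.1 (hTsub hp)).2
    refine Finset.mem_coe.2 (Finset.mem_biUnion.2 ⟨T, hTP, ?_⟩)
    exact Finset.mem_filter.2 ⟨Finset.mem_Ioc.2 ⟨hm1, hm2⟩, hdvd⟩
  have h1 : ((AgeK n).ncard : ℝ) ≤ (B.card : ℝ) := by
    have := Set.ncard_le_ncard hsub B.finite_toSet
    rw [Set.ncard_coe_finset] at this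
    exact_mod_cast this
  have h2 : (B.card : ℝ) ≤ ∑ T ∈ P.powersetCard K, ((n / ∏ p ∈ T, p : ℕ) : ℝ) := by
    have := Finset.card_biUnion_le (s := P.powersetCard K)
      (t := fun T => (Finset.Ioc 0 n).filter (fun m => (∏ p ∈ T, p) ∣ m))
    have heq : ∀ T ∈ P.powersetCard K,
        ((Finset.Ioc 0 n).filter (fun m => (∏ p ∈ T, p) ∣ m)).card = n / ∏ p ∈ T, p := by
      intro T _
      exact Nat.Ioc_filter_dvd_card_eq_div n (∏ p ∈ T, p)
    calc (B.card : ℝ) ≤ ((∑ T ∈ P.powersetCard K,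
          ((Finset.Ioc 0 n).filter (fun m => (∏ p ∈ T, p) ∣ m)).card : ℕ) : ℝ) := by
          exact_mod_cast this
      _ = ∑ T ∈ P.powersetCard K, ((n / ∏ p ∈ T, p : ℕ) : ℝ) := by
          push_cast
          exact Finset.sum_congr rfl (fun T hT => by rw [heq T hT])
  have h3 : ∑ T ∈ P.powersetCard K, ((n / ∏ p ∈ T, p : ℕ) : ℝ)
      ≤ ∑ T ∈ P.powersetCard K, (n : ℝ) * ∏ p ∈ T, ((p : ℝ))⁻¹ := by
    apply Finset.sum_le_sum
    intro T _
    calc ((n / ∏ p ∈ T, p : ℕ) : ℝ) ≤ (n : ℝ) / ((∏ p ∈ T, p : ℕ) : ℝ) := Nat.cast_div_le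
      _ = (n : ℝ) * ∏ p ∈ T, ((p : ℝ))⁻¹ := by
          rw [Nat.cast_prod, div_eq_mul_inv, ← Finset.prod_inv_distrib]
  rw [← Finset.mul_sum] at h3
  linarith

set_option maxHeartbeats 1000000 in
lemma main_bound (n : ℕ) (hy : Real.exp 200 ≤ Real.log n) :
    ((AgeK n).ncard : ℝ) ≤ ap n ^ ((1 : ℝ) / 2) * n := by
  classical
  set y := Real.log n with hydef
  set L := Real.log y with hLdef
  -- basic positivity
  have he1 : (1 : ℝ) ≤ Real.exp 200 := Real.one_le_exp (by norm_num)
  have hy1 : (1 : ℝ) ≤ y := he1.trans hy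
  have hy0 : (0 : ℝ) < y := by linarith
  have hn0 : (0 : ℝ) < (n : ℝ) := by
    by_contra h
    push_neg at h
    have : (n : ℝ) = 0 := le_antisymm h (by positivity)
    rw [hydef] at hy0
    rw [this, Real.log_zero] at hy0
    exact lt_irrefl _ hy0
  have hL200 : (200 : ℝ) ≤ L := by
    have := Real.log_le_log (Real.exp_pos 200) hy
    rwa [Real.log_exp] at this
  have hL0 : (0 : ℝ) < L := by linarith
  have hLy : L ≤ y := (Real.log_le_sub_one_of_pos hy0).trans (by linarith)
  have hsqy_eq : Real.sqrt (Real.exp 200) = Real.exp 100 := by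
    rw [show Real.exp 200 = Real.exp 100 * Real.exp 100 by rw [← Real.exp_add]; norm_num,
      Real.sqrt_mul_self (Real.exp_pos 100).le]
  have hexp100 : (2601 : ℝ) ≤ Real.exp 100 := by
    have h51 : (51 : ℝ) ≤ Real.exp 50 := by
      have := Real.add_one_le_exp (50 : ℝ); linarith
    have : Real.exp 100 = Real.exp 50 * Real.exp 50 := by rw [← Real.exp_add]; norm_num
    nlinarith
  have hsqy : (2601 : ℝ) ≤ Real.sqrt y := by
    calc (2601 : ℝ) ≤ Real.exp 100 := hexp100
      _ = Real.sqrt (Real.exp 200) := hsqy_eq.symm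
      _ ≤ Real.sqrt y := Real.sqrt_le_sqrt hy
  have hLsq : L ≤ 2 * Real.sqrt y := log_le_two_sqrt hy0
  have hsq0 : (0 : ℝ) < Real.sqrt y := by linarith
  -- y / L is large
  have hyL : (1024 : ℝ) ≤ y / L := by
    have h1 : y / L ≥ y / (2 * Real.sqrt y) := by
      apply div_le_div_of_nonneg_left hy0.le hL0 hLsq
    have h2 : y / (2 * Real.sqrt y) = Real.sqrt y / 2 := by
      rw [← Real.mul_self_sqrt hy0.le]
      field_simp
      nlinarith [Real.mul_self_sqrt hy0.le, Real.sq_sqrt (sq_nonneg (Real.sqrt y)),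
        Real.mul_self_sqrt (mul_self_nonneg (Real.sqrt y))]
    rw [h2] at h1
    linarith
  have hyL0 : (0 : ℝ) < y / L := by linarith
  -- k is at least 1
  have hkval : kp n = Real.sqrt (y / L) / 32 := by
    rw [kp, ← hydef, ← hLdef]
    norm_num
    ring
  have hsq1024 : (32 : ℝ) ≤ Real.sqrt (y / L) := by
    calc (32 : ℝ) = Real.sqrt 1024 := by
          rw [show (1024 : ℝ) = 32 * 32 by norm_num, Real.sqrt_mul_self (by norm_num)]
      _ ≤ Real.sqrt (y / L) := Real.sqrt_le_sqrt hyL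
  have hk1 : (1 : ℝ) ≤ kp n := by rw [hkval]; linarith
  have hk0 : (0 : ℝ) < kp n := by linarith
  -- log of W
  have hlogW : Real.log (Wp n) = Real.sqrt (y * L) / 1024 := by
    rw [Wp, Real.log_exp, ← hydef, ← hLdef]
    norm_num
    ring
  have hsqyL_le : Real.sqrt (y * L) ≤ y := by
    calc Real.sqrt (y * L) ≤ Real.sqrt (y * y) :=
          Real.sqrt_le_sqrt (by nlinarith)
      _ = y := Real.sqrt_mul_self hy0.le
  have hlogWy : Real.log (Wp n) ≤ y := by
    rw [hlogW]
    have := Real.sqrt_nonneg (y * L)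
    linarith
  have hWn : Wp n ≤ (n : ℝ) := by
    calc Wp n = Real.exp (Real.log (Wp n)) := (Real.exp_log (Real.exp_pos _)).symm
      _ ≤ Real.exp y := Real.exp_le_exp.2 hlogWy
      _ = (n : ℝ) := by rw [hydef, Real.exp_log hn0]
  -- W is at least 16
  have hsqyL_ge : (4096 : ℝ) ≤ Real.sqrt (y * L) := by
    have h24 : (2 : ℝ) ^ 24 ≤ y := by
      calc (2 : ℝ) ^ 24 ≤ Real.exp 24 := by exact_mod_cast pow2_le_exp 24
        _ ≤ Real.exp 200 := Real.exp_le_exp.2 (by norm_num)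
        _ ≤ y := hy
    have hyL24 : (2 : ℝ) ^ 24 ≤ y * L := by nlinarith
    calc (4096 : ℝ) = Real.sqrt ((2 : ℝ) ^ 24) := by
          rw [show (2 : ℝ) ^ 24 = 4096 * 4096 by norm_num, Real.sqrt_mul_self (by norm_num)]
      _ ≤ Real.sqrt (y * L) := Real.sqrt_le_sqrt hyL24
  have hlogW4 : (4 : ℝ) ≤ Real.log (Wp n) := by rw [hlogW]; linarith
  have hW16 : (16 : ℝ) ≤ Wp n := by
    calc (16 : ℝ) = 2 ^ 4 := by norm_num
      _ ≤ Real.exp 4 := by exact_mod_cast pow2_le_exp 4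
      _ ≤ Real.exp (Real.log (Wp n)) := Real.exp_le_exp.2 hlogW4
      _ = Wp n := Real.exp_log (Real.exp_pos _)
  set M := ⌊Wp n⌋₊ with hMdef
  have hM16 : 16 ≤ M := Nat.le_floor (by exact_mod_cast hW16)
  -- sum of reciprocals of primes up to W
  obtain ⟨σ, hσdef⟩ : ∃ s : ℝ, s = ∑ p ∈ Pfin n, ((p : ℝ))⁻¹ := ⟨_, rfl⟩
  have hσ0 : (0 : ℝ) ≤ σ := by
    rw [hσdef]; exact Finset.sum_nonneg fun p _ => by positivity
  have hPM : Pfin n ⊆ (Finset.range (M + 1)).filter Nat.Prime := by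
    intro p hp
    rw [Pfin, Finset.mem_filter] at hp
    obtain ⟨_, hpp, hple⟩ := hp
    refine Finset.mem_filter.2 ⟨Finset.mem_range.2 ?_, hpp⟩
    have : p ≤ M := Nat.le_floor hple
    omega
  have hσM : σ ≤ ∑ p ∈ (Finset.range (M + 1)).filter Nat.Prime, ((p : ℝ))⁻¹ := by
    rw [hσdef]
    exact Finset.sum_le_sum_of_subset_of_nonneg hPM (fun p _ _ => by positivity)
  have hmert := mertens_lite M hM16
  have hlogM0 : (1 : ℝ) < Real.log M := by
    have h1 : Real.log 16 ≤ Real.log M :=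
      Real.log_le_log (by norm_num) (by exact_mod_cast hM16)
    have h2 : (1 : ℝ) < Real.log 16 := by
      rw [show (16 : ℝ) = 2 ^ 4 by norm_num, Real.log_pow]
      have := Real.log_two_gt_d9
      push_cast
      nlinarith
    linarith
  have hlogMW : Real.log M ≤ Real.log (Wp n) :=
    Real.log_le_log (by positivity) (Nat.floor_le (Real.exp_pos _).le)
  have hloglogM : Real.log (Real.log M) ≤ L := by
    calc Real.log (Real.log M) ≤ Real.log (Real.log (Wp n)) :=
          Real.log_le_log (by linarith) hlogMW
      _ ≤ Real.log y := Real.log_le_log (by linarith) hlogWy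
      _ = L := hLdef.symm
  have hσ5L : σ ≤ 5 * L := by
    calc σ ≤ 8 + 4 * Real.log (Real.log M) := hσM.trans hmert
      _ ≤ 8 + 4 * L := by linarith
      _ ≤ 5 * L := by linarith
  clear hσM hmert hPM
  -- ceiling of k
  set K := ⌈kp n⌉₊ with hKdef
  have hkK : kp n ≤ (K : ℝ) := Nat.le_ceil _
  have hK1 : 1 ≤ K := Nat.one_le_ceil_iff.2 hk0
  have hKk : (K : ℝ) ≤ kp n + 1 := (Nat.ceil_lt_add_one hk0.le).le
  have hKpos : (0 : ℝ) < (K : ℝ) := by linarith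
  -- comparison with c = e * 5L / k
  set c := Real.exp 1 * (5 * L) / kp n with hcdef
  have hc0 : (0 : ℝ) < c := by
    rw [hcdef]
    exact div_pos (mul_pos (Real.exp_pos 1) (by linarith)) hk0
  -- lower bound on log k
  have hsqL : Real.sqrt L ≤ L / 14 := by
    have h14 : (14 : ℝ) ≤ Real.sqrt L := by
      calc (14 : ℝ) = Real.sqrt 196 := by
            rw [show (196 : ℝ) = 14 * 14 by norm_num, Real.sqrt_mul_self (by norm_num)]
        _ ≤ Real.sqrt L := Real.sqrt_le_sqrt (by linarith)
    have h2 : 14 * Real.sqrt L ≤ L := by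
      have := mul_le_mul_of_nonneg_right h14 (Real.sqrt_nonneg L)
      rwa [Real.mul_self_sqrt hL0.le] at this
    linarith
  have hlogL : Real.log L ≤ L / 7 := by
    have := log_le_two_sqrt hL0
    linarith
  have hlog2le1 : Real.log 2 ≤ 1 := by
    have h := Real.log_le_log (by norm_num : (0 : ℝ) < 2) two_le_exp_one
    rwa [Real.log_exp] at h
  have hlog2pos : (0 : ℝ) < Real.log 2 := Real.log_pos (by norm_num)
  have hlogk_eq : Real.log (kp n) = (L - Real.log L) / 2 - 5 * Real.log 2 := by
    rw [hkval, Real.log_div (by positivity) (by norm_num), Real.log_sqrt hyL0.le,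
      Real.log_div (by positivity) (by positivity), ← hLdef,
      show (32 : ℝ) = 2 ^ 5 by norm_num, Real.log_pow]
    push_cast
    ring
  have hlogk : 2 * L / 5 ≤ Real.log (kp n) := by
    rw [hlogk_eq]
    linarith only [hlogL, hlog2le1, hlog2pos, hL200]
  have hlogk0 : (0 : ℝ) < Real.log (kp n) := by linarith only [hlogk, hL200]
  -- log c is at most -(log k)/2
  have hlog5 : Real.log 5 ≤ 2 := by
    have e1 := Real.exp_one_gt_d9
    have hmm : (2.7182818283 : ℝ) * 2.7182818283 ≤ Real.exp 1 * Real.exp 1 :=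
      mul_le_mul e1.le e1.le (by norm_num) (Real.exp_pos 1).le
    have h : (5 : ℝ) ≤ Real.exp 1 * Real.exp 1 := by linarith only [hmm]
    have h2 := Real.log_le_log (by norm_num : (0 : ℝ) < 5) h
    rw [← Real.exp_add] at h2
    rw [Real.log_exp] at h2
    linarith
  have hlogc : Real.log c ≤ -(Real.log (kp n)) / 2 := by
    have hnum : (0 : ℝ) < Real.exp 1 * (5 * L) :=
      mul_pos (Real.exp_pos 1) (by linarith only [hL200])
    rw [hcdef, Real.log_div hnum.ne' hk0.ne',
      Real.log_mul (Real.exp_pos 1).ne' (by positivity), Real.log_exp,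
      Real.log_mul (by norm_num) hL0.ne']
    linarith only [hlog5, hlogL, hlogk, hL200]
  have hc1 : c ≤ 1 := by
    have : Real.log c ≤ 0 := by linarith only [hlogc, hlogk0]
    calc c = Real.exp (Real.log c) := (Real.exp_log hc0).symm
      _ ≤ Real.exp 0 := Real.exp_le_exp.2 this
      _ = 1 := Real.exp_zero
  -- final exponential comparison
  have hstep3 : c ^ K ≤ Real.exp (-(kp n * Real.log (kp n)) / 2) := by
    have h1 : c ^ K = c ^ ((K : ℕ) : ℝ) := (Real.rpow_natCast c K).symm
    have h2 : c ^ ((K : ℕ) : ℝ) ≤ c ^ (kp n) :=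
      Real.rpow_le_rpow_of_exponent_ge hc0 hc1 hkK
    have h3 : c ^ (kp n) = Real.exp (Real.log c * kp n) := Real.rpow_def_of_pos hc0 _
    have h4 : Real.log c * kp n ≤ -(kp n * Real.log (kp n)) / 2 := by
      have h := mul_le_mul_of_nonneg_right hlogc hk0.le
      calc Real.log c * kp n ≤ -(Real.log (kp n)) / 2 * kp n := h
        _ = -(kp n * Real.log (kp n)) / 2 := by ring
    calc c ^ K = c ^ ((K : ℕ) : ℝ) := h1
      _ ≤ c ^ (kp n) := h2
      _ = Real.exp (Real.log c * kp n) := h3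
      _ ≤ Real.exp (-(kp n * Real.log (kp n)) / 2) := Real.exp_le_exp.2 h4
  have hrhs : ap n ^ ((1 : ℝ) / 2) = Real.exp (-(kp n * Real.log (kp n)) / 2) := by
    rw [ap, Real.rpow_def_of_pos (Real.exp_pos _), Real.log_exp]
    ring_nf
  -- counting bound
  have hcount := count_bound n hWn
  have hesymm := factorial_mul_esymm_le (fun p => ((p : ℝ))⁻¹) (fun i => by positivity)
    (Pfin n) K
  rw [← hσdef] at hesymm
  have hfacpos : (0 : ℝ) < (K.factorial : ℝ) := by exact_mod_cast K.factorial_pos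
  have hsum_le : ∑ T ∈ (Pfin n).powersetCard K, ∏ p ∈ T, ((p : ℝ))⁻¹
      ≤ σ ^ K / (K.factorial : ℝ) := by
    rw [le_div_iff₀ hfacpos]
    calc (∑ T ∈ (Pfin n).powersetCard K, ∏ p ∈ T, ((p : ℝ))⁻¹) * (K.factorial : ℝ)
        = (K.factorial : ℝ) * ∑ T ∈ (Pfin n).powersetCard K, ∏ p ∈ T, ((p : ℝ))⁻¹ := by ring
      _ ≤ σ ^ K := hesymm
  -- factorial lower bound step
  have hstep1 : σ ^ K / (K.factorial : ℝ) ≤ (Real.exp 1 * σ / K) ^ K := by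
    have hfact := pow_le_factorial_mul_exp K
    have h := mul_le_mul_of_nonneg_left hfact (pow_nonneg hσ0 K)
    rw [div_pow, mul_pow, div_le_div_iff₀ hfacpos (pow_pos hKpos K)]
    calc σ ^ K * ((K : ℝ)) ^ K
        ≤ σ ^ K * ((K.factorial : ℝ) * Real.exp 1 ^ K) := h
      _ = Real.exp 1 ^ K * σ ^ K * (K.factorial : ℝ) := by ring
  have hstep2 : (Real.exp 1 * σ / K) ^ K ≤ c ^ K := by
    apply pow_le_pow_left₀ (div_nonneg (mul_nonneg (Real.exp_pos 1).le hσ0) hKpos.le)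
    rw [hcdef]
    apply div_le_div₀ (mul_nonneg (Real.exp_pos 1).le (by linarith : (0 : ℝ) ≤ 5 * L))
    · exact mul_le_mul_of_nonneg_left hσ5L (Real.exp_pos 1).le
    · exact hk0
    · exact hkK
  -- combine
  calc ((AgeK n).ncard : ℝ)
      ≤ (n : ℝ) * ∑ T ∈ (Pfin n).powersetCard K, ∏ p ∈ T, ((p : ℝ))⁻¹ := hcount
    _ ≤ (n : ℝ) * (σ ^ K / (K.factorial : ℝ)) :=
        mul_le_mul_of_nonneg_left hsum_le hn0.le
    _ ≤ (n : ℝ) * ((Real.exp 1 * σ / K) ^ K) :=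
        mul_le_mul_of_nonneg_left hstep1 hn0.le
    _ ≤ (n : ℝ) * c ^ K := mul_le_mul_of_nonneg_left hstep2 hn0.le
    _ ≤ (n : ℝ) * Real.exp (-(kp n * Real.log (kp n)) / 2) :=
        mul_le_mul_of_nonneg_left hstep3 hn0.le
    _ = ap n ^ ((1 : ℝ) / 2) * n := by rw [hrhs]; ring

/-- For all sufficiently large `n`, `|A_{≥k}| ≤ α^{1/2} · n = n · exp(−(k log k)/2)`. -/
theorem AgeK_ncard_le :
    ∃ N : ℕ, ∀ n : ℕ, N ≤ n →
      ((AgeK n).ncard : ℝ) ≤ ap n ^ ((1 : ℝ) / 2) * n := by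
  have htend : Filter.Tendsto (fun n : ℕ => Real.log n) Filter.atTop Filter.atTop :=
    Real.tendsto_log_atTop.comp tendsto_natCast_atTop_atTop
  obtain ⟨N, hN⟩ := Filter.eventually_atTop.1 (htend.eventually_ge_atTop (Real.exp 200))
  exact ⟨N, fun n hn => main_bound n (hN n hn)⟩
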